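/- Let q = 2^f with f ≥ 1, let U be the Sylow 2-subgroup of B₂(q) presented by X₁, X₂, X₃, X₄ ≅ (F_q,+) with [x₁(s), x₂(t)] = x₃(st)x₄(st²) and all other root elements commuting. Fix a₃, a₄ ∈ F_q×, and let λ be the linear character of Z = X₃X₄ with λ(x₃(t)) = φ(a₃t), λ(x₄(t)) = φ(a₄t), where φ(t) = exp(2πi·Tr(t)/2). Then {x₁(s) : λ([x₁(s), x₂(t)]) = 1 for all t ∈ F_q} = {1, x₁(a₄/a₃²)} and {x₂(t) : λ([x₁(s), x₂(t)]) = 1 for all s ∈ F_q} = {1, x₂(a₃/a₄)}. -/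

import Mathlib

open scoped commutatorElement

/-!
Since `φ` is the standard character of `ZMod 2` composed with the trace, `λ([x₁(s), x₂(t)]) = 1`
means `Tr(a₃st) = Tr(a₄st²)`. The trace is invariant under Frobenius, so writing `a₄s = c²` gives
`Tr(a₄st²) = Tr(ct)`, and nondegeneracy of the trace form turns the condition for all `t` into
`a₄s = (a₃s)²`; the condition for all `s` is linear in `s` and becomes `a₃t = a₄t²`.
-/

theorem Algebra.trace_pow_card_eq_trace (K L : Type*) [Field K] [Fintype K] [Field L] [Algebra K L]
    [FiniteDimensional K L] (x : L) :
    Algebra.trace K L (x ^ Fintype.card K) = Algebra.trace K L x :=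
  Algebra.trace_eq_of_algEquiv (FiniteField.frobeniusAlgEquivOfAlgebraic K L) x

theorem Algebra.forall_trace_mul_eq_iff {K L : Type*} [Field K] [Field L] [Algebra K L]
    [FiniteDimensional K L] [Algebra.IsSeparable K L] {x y : L} :
    (∀ t, Algebra.trace K L (x * t) = Algebra.trace K L (y * t)) ↔ x = y := by
  refine ⟨fun h => sub_eq_zero.mp ((traceForm_nondegenerate K L).1 (x - y) fun t => ?_), ?_⟩
  · simp [h t]
  · rintro rfl _; rfl

theorem ZMod.stdAddChar_mul_stdAddChar_eq_one_iff (c d : ZMod 2) :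
    stdAddChar c * stdAddChar d = 1 ↔ c = d := by
  rw [← AddChar.map_add_eq_mul, ← AddChar.map_zero_eq_one (stdAddChar (N := 2)),
    injective_stdAddChar.eq_iff]
  revert c d; decide

theorem mul_eq_mul_sq_iff {F : Type*} [Field F] {a b t : F} (hb : b ≠ 0) :
    a * t = b * t ^ 2 ↔ t = 0 ∨ t = a / b := by
  rw [eq_div_iff hb]
  constructor
  · intro h
    rcases eq_or_ne t 0 with ht | ht
    · exact .inl ht
    · exact .inr (mul_right_cancel₀ ht (by linear_combination -h))
  · rintro (rfl | h)
    · simp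
    · rw [← h]; ring

section CharTwo

variable {F : Type*} [Field F] [Fintype F] [Algebra (ZMod 2) F]

theorem forall_trace_mul_eq_trace_mul_sq_iff (a b : F) :
    (∀ t, Algebra.trace (ZMod 2) F (a * t) = Algebra.trace (ZMod 2) F (b * t ^ 2)) ↔
      b = a ^ 2 := by
  have : CharP F 2 := charP_of_injective_algebraMap (algebraMap (ZMod 2) F).injective 2
  obtain ⟨c, rfl⟩ := (frobeniusEquiv F 2).surjective b
  have htr (t : F) :
      Algebra.trace (ZMod 2) F (c ^ 2 * t ^ 2) = Algebra.trace (ZMod 2) F (c * t) := by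
    simpa [mul_pow] using Algebra.trace_pow_card_eq_trace (ZMod 2) F (c * t)
  simp only [frobeniusEquiv_apply, frobenius_def, htr, Algebra.forall_trace_mul_eq_iff]
  exact ⟨fun h => h ▸ rfl, fun h => (frobenius_inj F 2 h).symm⟩

theorem forall_trace_mul_mul_eq_iff_left {a₃ a₄ : F} (ha₃ : a₃ ≠ 0) (s : F) :
    (∀ t, Algebra.trace (ZMod 2) F (a₃ * (s * t)) =
        Algebra.trace (ZMod 2) F (a₄ * (s * t ^ 2))) ↔
      s = 0 ∨ s = a₄ / a₃ ^ 2 := by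
  simp only [← mul_assoc]
  rw [forall_trace_mul_eq_trace_mul_sq_iff, mul_pow, mul_eq_mul_sq_iff (pow_ne_zero 2 ha₃)]

theorem forall_trace_mul_mul_eq_iff_right {a₃ a₄ : F} (ha₄ : a₄ ≠ 0) (t : F) :
    (∀ s, Algebra.trace (ZMod 2) F (a₃ * (s * t)) =
        Algebra.trace (ZMod 2) F (a₄ * (s * t ^ 2))) ↔
      t = 0 ∨ t = a₃ / a₄ := by
  have h (s : F) : a₃ * (s * t) = a₃ * t * s ∧ a₄ * (s * t ^ 2) = a₄ * t ^ 2 * s :=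
    ⟨by ring, by ring⟩
  simp only [h, Algebra.forall_trace_mul_eq_iff]
  exact mul_eq_mul_sq_iff ha₄

end CharTwo

theorem setOf_exists_eq_apply_and_eq_pair {α β : Type*} (g : α → β) {P : α → Prop} {a b : α}
    (hP : ∀ s, P s ↔ s = a ∨ s = b) : {u | ∃ s, u = g s ∧ P s} = {g a, g b} := by
  ext u
  simp only [hP, Set.mem_ofPred_eq, Set.mem_insert_iff, Set.mem_singleton_iff]
  constructor
  · rintro ⟨s, rfl, rfl | rfl⟩ <;> simp
  · rintro (rfl | rfl) <;> exact ⟨_, rfl, by simp⟩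

theorem stmt12_general
    (F : Type) [Field F] [Fintype F] [Algebra (ZMod 2) F]
    (U : Type) [Group U]
    (x₁ x₂ x₃ x₄ : F → U)
    (hx₁ : ∀ s t, x₁ (s + t) = x₁ s * x₁ t)
    (hx₂ : ∀ s t, x₂ (s + t) = x₂ s * x₂ t)
    (hrel : ∀ s t, ⁅x₁ s, x₂ t⁆ = x₃ (s * t) * x₄ (s * t ^ 2))
    (a₃ a₄ : F) (ha₃ : a₃ ≠ 0) (ha₄ : a₄ ≠ 0)
    (φ : F → ℂ)
    (hφ : ∀ t : F, φ t =
      Complex.exp (2 * Real.pi * Complex.I * (((Algebra.trace (ZMod 2) F) t).val : ℂ) / 2))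
    (lam : U → ℂ)
    (hlam : ∀ s t : F, lam (x₃ s * x₄ t) = φ (a₃ * s) * φ (a₄ * t)) :
    ({u : U | ∃ s : F, u = x₁ s ∧ ∀ t : F, lam ⁅x₁ s, x₂ t⁆ = 1}
        = {1, x₁ (a₄ / a₃ ^ 2)}) ∧
    ({u : U | ∃ t : F, u = x₂ t ∧ ∀ s : F, lam ⁅x₁ s, x₂ t⁆ = 1}
        = {1, x₂ (a₃ / a₄)}) := by
  have hφ' (t : F) : φ t = ZMod.stdAddChar (Algebra.trace (ZMod 2) F t) := by
    rw [hφ, ZMod.stdAddChar_apply, ZMod.toCircle_apply]; push_cast; rfl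
  have key (s t : F) : lam ⁅x₁ s, x₂ t⁆ = 1 ↔
      Algebra.trace (ZMod 2) F (a₃ * (s * t)) = Algebra.trace (ZMod 2) F (a₄ * (s * t ^ 2)) := by
    rw [hrel, hlam, hφ', hφ', ZMod.stdAddChar_mul_stdAddChar_eq_one_iff]
  have hx₁one : x₁ 0 = 1 := (left_eq_mul (a := x₁ 0)).mp (by rw [← hx₁, add_zero])
  have hx₂one : x₂ 0 = 1 := (left_eq_mul (a := x₂ 0)).mp (by rw [← hx₂, add_zero])
  constructor
  · rw [← hx₁one]
    refine setOf_exists_eq_apply_and_eq_pair x₁ fun s => ?_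
    simp only [key, forall_trace_mul_mul_eq_iff_left ha₃]
  · rw [← hx₂one]
    refine setOf_exists_eq_apply_and_eq_pair x₂ fun t => ?_
    simp only [key, forall_trace_mul_mul_eq_iff_right ha₄]

/-- In the Sylow 2-subgroup `U` of `B₂(q)`, `q = 2^f`, with `λ` the linear
character of `Z = X₃X₄` given by `λ(x₃(t)) = φ(a₃t)`, `λ(x₄(t)) = φ(a₄t)` for fixed
`a₃, a₄ ∈ F_q×`, where `φ(t) = exp(2πi·Tr(t)/2)`, one has
`{x₁(s) : λ([x₁(s), x₂(t)]) = 1 ∀t} = {1, x₁(a₄/a₃²)}` and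
`{x₂(t) : λ([x₁(s), x₂(t)]) = 1 ∀s} = {1, x₂(a₃/a₄)}`. -/
theorem stmt12 (f : ℕ) (hf : 0 < f)
    (F : Type) [Field F] [Fintype F] [Algebra (ZMod 2) F] (hcard : Fintype.card F = 2 ^ f)
    (U : Type) [Group U] [Fintype U]
    (x₁ x₂ x₃ x₄ : F → U)
    (hx₁ : ∀ s t, x₁ (s + t) = x₁ s * x₁ t) (hx₁inj : Function.Injective x₁)
    (hx₂ : ∀ s t, x₂ (s + t) = x₂ s * x₂ t) (hx₂inj : Function.Injective x₂)
    (hx₃ : ∀ s t, x₃ (s + t) = x₃ s * x₃ t) (hx₃inj : Function.Injective x₃)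
    (hx₄ : ∀ s t, x₄ (s + t) = x₄ s * x₄ t) (hx₄inj : Function.Injective x₄)
    (hrel : ∀ s t, ⁅x₁ s, x₂ t⁆ = x₃ (s * t) * x₄ (s * t ^ 2))
    (hc13 : ∀ s t, x₁ s * x₃ t = x₃ t * x₁ s)
    (hc14 : ∀ s t, x₁ s * x₄ t = x₄ t * x₁ s)
    (hc23 : ∀ s t, x₂ s * x₃ t = x₃ t * x₂ s)
    (hc24 : ∀ s t, x₂ s * x₄ t = x₄ t * x₂ s)
    (hc34 : ∀ s t, x₃ s * x₄ t = x₄ t * x₃ s)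
    (a₃ a₄ : F) (ha₃ : a₃ ≠ 0) (ha₄ : a₄ ≠ 0)
    (φ : F → ℂ)
    (hφ : ∀ t : F, φ t =
      Complex.exp (2 * Real.pi * Complex.I * (((Algebra.trace (ZMod 2) F) t).val : ℂ) / 2))
    (lam : U → ℂ)
    (hlam : ∀ s t : F, lam (x₃ s * x₄ t) = φ (a₃ * s) * φ (a₄ * t)) :
    ({u : U | ∃ s : F, u = x₁ s ∧ ∀ t : F, lam ⁅x₁ s, x₂ t⁆ = 1}
        = {1, x₁ (a₄ / a₃ ^ 2)}) ∧
    ({u : U | ∃ t : F, u = x₂ t ∧ ∀ s : F, lam ⁅x₁ s, x₂ t⁆ = 1}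
        = {1, x₂ (a₃ / a₄)}) :=
  stmt12_general F U x₁ x₂ x₃ x₄ hx₁ hx₂ hrel a₃ a₄ ha₃ ha₄ φ hφ lam hlam
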